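/- arXiv:0801.1976 — 8 statements merged into one kernel-verified Lean document; each statement's English description precedes it below -/
import Mathlib

section
/- If all main blocks have the same size p (i.e., p_1 = ... = p_n = p), then for all n ≥ 1, k ≥ 0, m ≥ 0, F(n,k,P,m) = Σ_{i=0}^{n} (-1)^i · C(n,i) · C(np + m - ip, n+k). -/
/-- The ground set: `n` main blocks, the `i`-th of size `p i`, plus an
additional block of size `m`. -/
abbrev InsetGround (n : ℕ) (p : Fin n → ℕ) (m : ℕ) : Type :=
  (Σ i : Fin n, Fin (p i)) ⊕ Fin m

/-- `F n p m k` is the number of `(n+k)`-subsets of the ground set that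
intersect every main block (the "(n+k)-insets"). -/
def F (n : ℕ) (p : Fin n → ℕ) (m k : ℕ) : ℕ :=
  ((Finset.univ : Finset (Finset (InsetGround n p m))).filter
    (fun U => U.card = n + k ∧
      ∀ i : Fin n, ∃ x : Σ j : Fin n, Fin (p j), x.1 = i ∧ Sum.inl x ∈ U)).card

lemma mem_inf_finset {ι α : Type*} [Fintype α] [DecidableEq α] {s : Finset ι}
    {f : ι → Finset α} {a : α} : a ∈ s.inf f ↔ ∀ i ∈ s, a ∈ f i := by
  induction s using Finset.cons_induction <;> simp [*]

theorem stmt_1 (n : ℕ) (hn : 1 ≤ n) (k m p : ℕ) (hp : 1 ≤ p) :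
    (F n (fun _ => p) m k : ℤ) =
      ∑ i ∈ Finset.range (n + 1), (-1 : ℤ) ^ i * (n.choose i : ℤ) *
        ((n * p + m - i * p).choose (n + k) : ℤ) := by
  classical
  set G := InsetGround n (fun _ => p) m with hG
  have hcardG : Fintype.card G = n * p + m := by
    simp [hG, InsetGround, Fintype.card_sigma, mul_comm]
  let α := {U : Finset G // U.card = n + k}
  let S : Fin n → Finset α := fun i =>
    Finset.univ.filter (fun U => ∀ y : Fin p, (Sum.inl ⟨i, y⟩ : G) ∉ U.1)
  let block : Fin n → Finset G := fun i =>
    Finset.univ.image (fun y : Fin p => (Sum.inl ⟨i, y⟩ : G))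
  have hblock_card : ∀ i, (block i).card = p := by
    intro i
    rw [Finset.card_image_of_injective _ (fun y z h => by
      injection h with h2; simpa using h2)]
    simp
  have hbiU : ∀ t : Finset (Fin n), (t.biUnion block).card = t.card * p := by
    intro t
    rw [Finset.card_biUnion]
    · simp [hblock_card, mul_comm]
    · intro i hi j hj hij
      simp only [Finset.disjoint_left, block, Finset.mem_image]
      rintro a ⟨y, -, rfl⟩ ⟨z, -, h⟩
      injection h with h2
      exact hij (congrArg Sigma.fst h2).symm
  have hinf_card : ∀ t : Finset (Fin n),
      (t.inf S).card = (n * p + m - t.card * p).choose (n + k) := by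
    intro t
    have hb : (t.inf S).card = (Finset.powersetCard (n + k) (t.biUnion block)ᶜ).card := by
      apply Finset.card_bij (fun (U : α) _ => U.1)
      · intro U hU
        rw [mem_inf_finset] at hU
        refine Finset.mem_powersetCard.2 ⟨?_, U.2⟩
        intro a ha
        rw [Finset.mem_compl]
        intro hab
        rcases Finset.mem_biUnion.1 hab with ⟨i, hi, hai⟩
        rcases Finset.mem_image.1 hai with ⟨y, -, rfl⟩
        exact (Finset.mem_filter.1 (hU i hi)).2 y ha
      · intro U _ V _ h
        exact Subtype.ext h
      · intro V hV
        rcases Finset.mem_powersetCard.1 hV with ⟨hsub, hcard⟩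
        refine ⟨⟨V, hcard⟩, ?_, rfl⟩
        rw [mem_inf_finset]
        intro i hi
        refine Finset.mem_filter.2 ⟨Finset.mem_univ _, ?_⟩
        intro y hy
        exact (Finset.mem_compl.1 (hsub hy))
          (Finset.mem_biUnion.2 ⟨i, hi, Finset.mem_image.2 ⟨y, Finset.mem_univ _, rfl⟩⟩)
    rw [hb, Finset.card_powersetCard, Finset.card_compl, hcardG, hbiU]
  have hF : F n (fun _ => p) m k = (Finset.univ.inf fun i => (S i)ᶜ).card := by
    rw [F]
    apply (Finset.card_bij (fun (U : α) _ => U.1) ?_ ?_ ?_).symm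
    · intro U hU
      rw [mem_inf_finset] at hU
      refine Finset.mem_filter.2 ⟨Finset.mem_univ _, U.2, ?_⟩
      intro i
      have h := hU i (Finset.mem_univ i)
      rw [Finset.mem_compl, Finset.mem_filter] at h
      push_neg at h
      obtain ⟨y, hy⟩ := h (Finset.mem_univ _)
      exact ⟨⟨i, y⟩, rfl, hy⟩
    · intro U _ V _ h
      exact Subtype.ext h
    · intro V hV
      rw [Finset.mem_filter] at hV
      obtain ⟨-, hcard, hall⟩ := hV
      refine ⟨⟨V, hcard⟩, ?_, rfl⟩
      rw [mem_inf_finset]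
      intro i _
      rw [Finset.mem_compl, Finset.mem_filter]
      push_neg
      intro _
      obtain ⟨⟨j, y⟩, hji, hy⟩ := hall i
      dsimp at hji
      subst hji
      exact ⟨y, hy⟩
  calc (F n (fun _ => p) m k : ℤ)
      = ((Finset.univ.inf fun i => (S i)ᶜ).card : ℤ) := by rw [hF]
    _ = ∑ t ∈ (Finset.univ : Finset (Fin n)).powerset,
          (-1 : ℤ) ^ t.card * ((t.inf S).card : ℤ) :=
        Finset.inclusion_exclusion_card_inf_compl _ _
    _ = ∑ t ∈ (Finset.univ : Finset (Fin n)).powerset,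
          (fun j => (-1 : ℤ) ^ j * ((n * p + m - j * p).choose (n + k) : ℤ)) t.card := by
        refine Finset.sum_congr rfl fun t _ => ?_
        rw [hinf_card]
    _ = ∑ i ∈ Finset.range ((Finset.univ : Finset (Fin n)).card + 1),
          (Finset.univ : Finset (Fin n)).card.choose i •
            ((-1 : ℤ) ^ i * ((n * p + m - i * p).choose (n + k) : ℤ)) :=
        Finset.sum_powerset_apply_card
          (f := fun j => (-1 : ℤ) ^ j * ((n * p + m - j * p).choose (n + k) : ℤ))
          (x := (Finset.univ : Finset (Fin n)))
    _ = ∑ i ∈ Finset.range (n + 1), (-1 : ℤ) ^ i * (n.choose i : ℤ) *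
          ((n * p + m - i * p).choose (n + k) : ℤ) := by
        rw [Finset.card_univ, Fintype.card_fin]
        refine Finset.sum_congr rfl fun i _ => ?_
        rw [nsmul_eq_mul]
        ring
end

section
/- For all integers n ≥ 1, p > 1, and m ≥ 0, one has p^n = Σ_{i=0}^{n} (-1)^i · C(n,i) · C(pn + m - pi, n). -/
open Polynomial Finset

namespace Stmt4Aux


lemma fwdDiff_eval (P : ℚ[X]) :
    fwdDiff (1:ℕ) (fun x : ℕ ↦ P.eval (x:ℚ)) = fun x : ℕ ↦ (taylor 1 P - P).eval (x:ℚ) := by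
  funext x
  simp [fwdDiff, taylor_apply, eval_comp]

lemma taylor_coeff_sum (P : ℚ[X]) (N j : ℕ) (h : P.natDegree < N) :
    (taylor 1 P).coeff j = ∑ k ∈ range N, P.coeff k * (k.choose j) := by
  conv_lhs => rw [P.as_sum_range' N h]
  rw [map_sum, finset_sum_coeff]
  refine Finset.sum_congr rfl fun k _ ↦ ?_
  rw [taylor_monomial, coeff_C_mul]
  norm_num [coeff_X_add_one_pow]

lemma diff_coeff (P : ℚ[X]) (d : ℕ) (h : P.natDegree ≤ d + 1) :
    (taylor 1 P - P).coeff d = (d+1) * P.coeff (d+1) := by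
  rw [coeff_sub, taylor_coeff_sum P (d+2) d (by omega)]
  rw [Finset.sum_range_succ, Finset.sum_range_succ]
  rw [Finset.sum_eq_zero (fun k hk ↦ by
    rw [Nat.choose_eq_zero_of_lt (Finset.mem_range.mp hk)]; ring)]
  simp [Nat.choose_succ_self_right]
  ring

lemma diff_coeff_top (P : ℚ[X]) (d : ℕ) (h : P.natDegree ≤ d + 1) :
    (taylor 1 P - P).coeff (d+1) = 0 := by
  rw [coeff_sub, taylor_coeff_sum P (d+2) (d+1) (by omega)]
  rw [Finset.sum_range_succ]
  rw [Finset.sum_eq_zero (fun k hk ↦ by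
    rw [Nat.choose_eq_zero_of_lt (Finset.mem_range.mp hk)]; ring)]
  simp

lemma diff_natDegree (P : ℚ[X]) (d : ℕ) (h : P.natDegree ≤ d + 1) :
    (taylor 1 P - P).natDegree ≤ d := by
  rw [natDegree_le_iff_coeff_eq_zero]
  intro N hN
  rcases eq_or_lt_of_le (Nat.succ_le_of_lt hN) with hE | hL
  · rw [← hE]; exact diff_coeff_top P d h
  · rw [coeff_sub, coeff_eq_zero_of_natDegree_lt, coeff_eq_zero_of_natDegree_lt, sub_zero]
    · omega
    · rw [natDegree_taylor]; omega

lemma cast_desc (a n : ℕ) : (a.descFactorial n : ℚ) = ∏ i ∈ range n, ((a:ℚ) - i) := by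
  rcases le_or_gt n a with h | h
  · rw [Nat.descFactorial_eq_prod_range]
    rw [Nat.cast_prod]
    exact Finset.prod_congr rfl fun i hi ↦ Nat.cast_sub (le_trans (Nat.le_of_lt_succ (Nat.lt_succ_of_lt (Finset.mem_range.mp hi))) h)
  · rw [Nat.descFactorial_eq_zero_iff_lt.mpr h, Finset.prod_eq_zero (Finset.mem_range.mpr h)]
    · simp
    · simp

lemma key : ∀ (d : ℕ) (P : ℚ[X]), P.natDegree ≤ d →
    (fwdDiff (1:ℕ))^[d] (fun x : ℕ ↦ P.eval (x:ℚ)) 0 = (Nat.factorial d : ℚ) * P.coeff d := by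
  intro d
  induction d with
  | zero =>
    intro P h
    rw [eq_C_of_natDegree_le_zero h]
    simp
  | succ d IH =>
    intro P h
    rw [Function.iterate_succ_apply, fwdDiff_eval,
      IH _ (diff_natDegree P d h), diff_coeff P d h]
    push_cast [Nat.factorial_succ]
    ring


section
variable (n p m : ℕ)

noncomputable def Pl : ℚ[X] :=
  C ((Nat.factorial n : ℚ))⁻¹ * ∏ i ∈ range n, (C (p:ℚ) * X + C ((m:ℚ) - i))

lemma Pl_eval (x : ℕ) : (Pl n p m).eval (x:ℚ) = ((p*x+m).choose n : ℚ) := by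
  have h1 : (∏ i ∈ range n, ((C (p:ℚ) * X + C ((m:ℚ) - i)).eval (x:ℚ)))
      = ((p*x+m).descFactorial n : ℚ) := by
    rw [cast_desc]
    refine Finset.prod_congr rfl fun i _ ↦ ?_
    simp; push_cast; ring
  rw [Pl, eval_mul, eval_prod, eval_C, h1, Nat.descFactorial_eq_factorial_mul_choose]
  push_cast
  rw [← mul_assoc, inv_mul_cancel₀ (by positivity), one_mul]

lemma Pl_natDegree : (Pl n p m).natDegree ≤ n := by
  refine le_trans (natDegree_C_mul_le _ _) ?_
  refine le_trans (natDegree_prod_le _ _) ?_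
  refine le_trans (Finset.sum_le_card_nsmul _ _ 1 fun i _ ↦ ?_) (by simp)
  exact natDegree_linear_le

lemma Pl_coeff (hp : 0 < p) : (Pl n p m).coeff n = ((Nat.factorial n : ℚ))⁻¹ * (p:ℚ)^n := by
  rw [Pl, coeff_C_mul]
  congr 1
  have hne : ∀ i ∈ range n, (C (p:ℚ) * X + C ((m:ℚ) - i)) ≠ 0 := fun i _ ↦ by
    intro hc
    have := natDegree_linear (a := (p:ℚ)) (b := ((m:ℚ) - i)) (ne_of_gt (by exact_mod_cast hp))
    rw [hc] at this; simp at this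
  have hdeg : (∏ i ∈ range n, (C (p:ℚ) * X + C ((m:ℚ) - i))).natDegree = n := by
    rw [natDegree_prod _ _ hne]
    have hp' : (p:ℚ) ≠ 0 := ne_of_gt (by exact_mod_cast hp)
    calc ∑ i ∈ range n, (C (p:ℚ) * X + C ((m:ℚ) - i)).natDegree
        = ∑ _i ∈ range n, 1 := Finset.sum_congr rfl fun i _ ↦ natDegree_linear hp'
      _ = n := by simp
  have hc : (∏ i ∈ range n, (C (p:ℚ) * X + C ((m:ℚ) - i))).coeff n
      = (∏ i ∈ range n, (C (p:ℚ) * X + C ((m:ℚ) - i))).leadingCoeff := by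
    rw [leadingCoeff, hdeg]
  rw [hc, leadingCoeff_prod]
  have hp' : (p:ℚ) ≠ 0 := ne_of_gt (by exact_mod_cast hp)
  calc ∏ i ∈ range n, (C (p:ℚ) * X + C ((m:ℚ) - i)).leadingCoeff
      = ∏ _i ∈ range n, (p:ℚ) := Finset.prod_congr rfl fun i _ ↦ leadingCoeff_linear hp'
    _ = (p:ℚ)^n := by simp
end

end Stmt4Aux

open Stmt4Aux in
theorem stmt_4 (n p m : ℕ) (hn : 1 ≤ n) (hp : 1 < p) :
    (p : ℤ) ^ n =
      ∑ i ∈ Finset.range (n + 1), (-1 : ℤ) ^ i * (n.choose i : ℤ) *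
        ((p * n + m - p * i).choose n : ℤ) := by
  have hp0 : 0 < p := by omega
  apply @Int.cast_injective ℚ
  push_cast
  have hsum := fwdDiff_iter_eq_sum_shift (1:ℕ) (fun x : ℕ ↦ ((p*x+m).choose n : ℚ)) n 0
  have hfe : (fun x : ℕ ↦ ((p*x+m).choose n : ℚ)) = fun x : ℕ ↦ (Pl n p m).eval (x:ℚ) := by
    funext x; rw [Pl_eval]
  rw [hfe, key n (Pl n p m) (Pl_natDegree n p m), Pl_coeff n p m hp0, ← mul_assoc,
    mul_inv_cancel₀ (by positivity), one_mul] at hsum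
  rw [hsum, ← Finset.sum_range_reflect]
  refine Finset.sum_congr rfl fun j hj ↦ ?_
  have hj' : j ≤ n := by simpa [Nat.lt_succ_iff] using hj
  have h1 : n + 1 - 1 - j = n - j := by omega
  have h2 : p * (n - j) = p * n - p * j := Nat.mul_sub p n j
  have h3 : p * j ≤ p * n := Nat.mul_le_mul_left p hj'
  have h5 : n - (n - j) = j := by omega
  rw [h1, h5, Nat.choose_symm hj']
  have h6 : (0 + (n - j) • 1 : ℕ) = n - j := by simp
  rw [h6]
  have h7 : p * (n - j) + m = p * n + m - p * j := by omega
  simp only [h7, zsmul_eq_mul]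
  push_cast
  ring
end

section
/- For all n ≥ 1, k ≥ 0, a multiset P of positive integer block sizes, and m ≥ 0, F(n,k,P,m) = F(n, k+1, P, m+1) - F(n, k+1, P, m). -/
/-!
Pascal's rule for insets. Single out one point `*` of the additional block of size `m + 1`.
An `(n + k + 1)`-inset either contains `*`, and removing it leaves an `(n + k)`-inset of the
ground set with `m` additional points, or it does not, and is then an `(n + k + 1)`-inset of
that smaller ground set; `*` plays no role in the covering condition. Hence
`F(n, k+1, P, m+1) = F(n, k, P, m) + F(n, k+1, P, m)`.
-/

open Finset

theorem card_filter_option_card_succ {α : Type*} [Fintype α] [DecidableEq α]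
    (Q : Finset α → Prop) [DecidablePred Q] (j : ℕ) :
    #{V : Finset (Option α) | #V = j + 1 ∧ Q V.eraseNone} =
      #{U : Finset α | #U = j ∧ Q U} + #{U : Finset α | #U = j + 1 ∧ Q U} := by
  rw [← card_filter_add_card_filter_not (fun V : Finset (Option α) => none ∈ V),
    filter_filter, filter_filter]
  congr 1
  · refine card_nbij' eraseNone insertNone ?_ ?_ ?_ ?_
    · intro V hV
      simp only [coe_filter, mem_univ, true_and, Set.mem_ofPred_eq] at hV ⊢
      exact ⟨by rw [card_eraseNone_of_mem hV.2, hV.1.1, Nat.add_sub_cancel], hV.1.2⟩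
    · intro U hU
      simp_all [card_insertNone]
    · intro V hV
      simp_all
    · intro U _
      exact eraseNone_insertNone U
  · refine card_nbij' eraseNone (map Function.Embedding.some) ?_ ?_ ?_ ?_
    · intro V hV
      simp only [coe_filter, mem_univ, true_and, Set.mem_ofPred_eq] at hV ⊢
      exact ⟨by rw [card_eraseNone_of_not_mem hV.2, hV.1.1], hV.1.2⟩
    · intro U hU
      simp_all
    · intro V hV
      simp_all
    · intro U _
      exact eraseNone_map_some U

def sumOptionEquiv (α β : Type*) : α ⊕ Option β ≃ Option (α ⊕ β) :=
  (Equiv.sumCongr (Equiv.refl α) (Equiv.optionEquivSumPUnit.{0} β)).trans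
    ((Equiv.sumAssoc α β Unit).symm.trans (Equiv.optionEquivSumPUnit.{0} (α ⊕ β)).symm)

section Insets

variable {n : ℕ} {p : Fin n → ℕ}

def CoversBlocks {γ : Type*} (U : Finset ((Σ i : Fin n, Fin (p i)) ⊕ γ)) : Prop :=
  ∀ i : Fin n, ∃ x : Σ j : Fin n, Fin (p j), x.1 = i ∧ Sum.inl x ∈ U

instance {γ : Type*} [Fintype γ] [DecidableEq γ] : DecidablePred (@CoversBlocks n p γ) :=
  fun U => inferInstanceAs
    (Decidable (∀ i : Fin n, ∃ x : Σ j : Fin n, Fin (p j), x.1 = i ∧ Sum.inl x ∈ U))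

theorem F_eq_card_coversBlocks (m k : ℕ) :
    F n p m k = #{U : Finset (InsetGround n p m) | #U = n + k ∧ CoversBlocks U} := rfl

def insetGroundSuccEquiv (m : ℕ) : InsetGround n p (m + 1) ≃ Option (InsetGround n p m) :=
  (Equiv.sumCongr (Equiv.refl _) finSuccEquivLast).trans (sumOptionEquiv _ _)

theorem coversBlocks_map_insetGroundSuccEquiv {m : ℕ} (U : Finset (InsetGround n p (m + 1))) :
    CoversBlocks (U.map (insetGroundSuccEquiv m).toEmbedding).eraseNone ↔ CoversBlocks U := by
  have h : ∀ x, Sum.inl x ∈ (U.map (insetGroundSuccEquiv m).toEmbedding).eraseNone ↔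
      Sum.inl x ∈ U := fun x => by
    rw [mem_eraseNone]
    exact mem_map_equiv (f := insetGroundSuccEquiv m)
  simp only [CoversBlocks, h]

theorem F_succ_eq_card_option (m k : ℕ) :
    F n p (m + 1) k =
      #{V : Finset (Option (InsetGround n p m)) | #V = n + k ∧ CoversBlocks V.eraseNone} := by
  rw [F_eq_card_coversBlocks]
  refine card_equiv (insetGroundSuccEquiv m).finsetCongr fun U => ?_
  simp only [mem_filter, mem_univ, true_and, Equiv.finsetCongr_apply, card_map,
    coversBlocks_map_insetGroundSuccEquiv]

theorem F_succ_succ (m k : ℕ) : F n p (m + 1) (k + 1) = F n p m k + F n p m (k + 1) := by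
  rw [F_succ_eq_card_option]
  exact card_filter_option_card_succ CoversBlocks (n + k)

end Insets

theorem stmt_7_general (n : ℕ) (k m : ℕ) (p : Fin n → ℕ) :
    (F n p m k : ℤ) = (F n p (m + 1) (k + 1) : ℤ) - (F n p m (k + 1) : ℤ) := by
  rw [F_succ_succ]
  push_cast
  ring

theorem stmt_7 (n : ℕ) (hn : 1 ≤ n) (k m : ℕ) (p : Fin n → ℕ)
    (hp : ∀ i, 1 ≤ p i) :
    (F n p m k : ℤ) = (F n p (m + 1) (k + 1) : ℤ) - (F n p m (k + 1) : ℤ) :=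
  stmt_7_general n k m p
end

section
/- For n ≥ 2, k ≥ 0, m ≥ 0 and a fixed index j ∈ {1,...,n}, one has F(n,k,P,m) = Σ_{i=1}^{p_j} C(p_j, i) · F(n-1, k-i+1, P \ {p_j}, m), where P \ {p_j} is the multiset of block sizes with the j-th block removed (terms with k-i+1 < 0 are zero). -/
/-- The inset-counting function with an integer parameter `k`, equal to `0`
when `k < 0` (the paper's convention `F(n,k,P,m) = 0` for `k < 0`). -/
def Fz (n : ℕ) (p : Fin n → ℕ) (m : ℕ) (k : ℤ) : ℕ :=
  if 0 ≤ k then F n p m k.toNat else 0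

/-!
Split the ground set into the `j`-th block and the ground set of the remaining `n` blocks. An
`(n+1+k)`-inset `U` then corresponds to a pair `(S, V)`: a nonempty subset `S` of the `j`-th block
and an inset `V` of the smaller ground set with `|S| + |V| = n + 1 + k`. Grouping by `i = |S|`
gives `C(p_j, i)` choices for `S` and `F(n, k - i + 1)` for `V`; the latter count is zero when
`k - i + 1 < 0` because an inset of `n` blocks has at least `n` elements.
-/

open Finset

namespace InsetGround

variable {n : ℕ} (p : Fin (n + 1) → ℕ) (m : ℕ)

def ofSumRemoveNth (j : Fin (n + 1)) :
    Fin (p j) ⊕ InsetGround n (j.removeNth p) m → InsetGround (n + 1) p m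
  | .inl b => .inl ⟨j, b⟩
  | .inr (.inl ⟨i, b⟩) => .inl ⟨j.succAbove i, b⟩
  | .inr (.inr c) => .inr c

lemma ofSumRemoveNth_bijective (j : Fin (n + 1)) :
    Function.Bijective (ofSumRemoveNth p m j) := by
  constructor
  · rintro (b₁ | ⟨i₁, b₁⟩ | c₁) (b₂ | ⟨i₂, b₂⟩ | c₂) h <;>
      simp only [ofSumRemoveNth, Sum.inl.injEq, Sum.inr.injEq, reduceCtorEq] at h ⊢
    · simpa using h
    · exact absurd (congrArg Sigma.fst h) (Fin.succAbove_ne j i₂).symm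
    · exact absurd (congrArg Sigma.fst h) (Fin.succAbove_ne j i₁)
    · obtain ⟨h₁, h₂⟩ := Sigma.mk.inj_iff.1 h
      obtain rfl := Fin.succAbove_right_injective h₁
      rw [eq_of_heq h₂]
    · exact h
  · rintro (⟨i, b⟩ | c)
    · rcases Fin.eq_self_or_eq_succAbove j i with rfl | ⟨i, rfl⟩
      exacts [⟨.inl b, rfl⟩, ⟨.inr (.inl ⟨i, b⟩), rfl⟩]
    · exact ⟨.inr (.inr c), rfl⟩

noncomputable def sumRemoveNthEquiv (j : Fin (n + 1)) :
    Fin (p j) ⊕ InsetGround n (j.removeNth p) m ≃ InsetGround (n + 1) p m :=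
  .ofBijective _ (ofSumRemoveNth_bijective p m j)

end InsetGround

def IsInset {n : ℕ} {p : Fin n → ℕ} {m : ℕ} (U : Finset (InsetGround n p m)) : Prop :=
  ∀ i, ∃ b : Fin (p i), Sum.inl ⟨i, b⟩ ∈ U

instance {n : ℕ} {p : Fin n → ℕ} {m : ℕ} : DecidablePred (IsInset (p := p) (m := m)) :=
  fun _ => inferInstanceAs (Decidable (∀ _, _))

lemma F_eq_card_isInset (n : ℕ) (p : Fin n → ℕ) (m k : ℕ) :
    F n p m k = #{U : Finset (InsetGround n p m) | #U = n + k ∧ IsInset U} := by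
  rw [F]
  exact congrArg card <| filter_congr fun U _ => by simp [IsInset]

lemma IsInset.le_card {n : ℕ} {p : Fin n → ℕ} {m : ℕ} {U : Finset (InsetGround n p m)}
    (hU : IsInset U) : n ≤ #U := by
  choose b hb using hU
  simpa using card_le_card_of_injOn (s := univ)
    (fun i => (Sum.inl ⟨i, b i⟩ : InsetGround n p m)) (fun i _ => hb i) fun i _ i' _ h => (Sigma.mk.inj_iff.1 (Sum.inl_injective h)).1

lemma isInset_map_sumRemoveNthEquiv {n : ℕ} {p : Fin (n + 1) → ℕ} {m : ℕ} {j : Fin (n + 1)}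
    (W : Finset (Fin (p j) ⊕ InsetGround n (j.removeNth p) m)) :
    IsInset (W.map (InsetGround.sumRemoveNthEquiv p m j).toEmbedding) ↔
      W.toLeft.Nonempty ∧ IsInset W.toRight := by
  set e := (InsetGround.sumRemoveNthEquiv p m j).toEmbedding
  rw [IsInset, Fin.forall_iff_succAbove j]
  exact and_congr (exists_congr fun b => (mem_map' e (a := .inl b)).trans mem_toLeft.symm)
    (forall_congr' fun i => exists_congr fun b =>
      (mem_map' e (a := .inr (.inl ⟨i, b⟩))).trans mem_toRight.symm)

lemma card_filter_toLeft_nonempty_eq_sum_choose {α β : Type*} [Fintype α] [Fintype β]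
    [DecidableEq α] [DecidableEq β] (N : ℕ) (Q : Finset β → Prop) [DecidablePred Q] :
    #{W : Finset (α ⊕ β) | #W = N ∧ W.toLeft.Nonempty ∧ Q W.toRight} =
      ∑ i ∈ Icc 1 (Fintype.card α),
        (Fintype.card α).choose i * #{V : Finset β | #V + i = N ∧ Q V} := by
  set T : Finset (Finset α × Finset β) := {q | #q.1 + #q.2 = N ∧ q.1.Nonempty ∧ Q q.2}
  have hT : ∀ q ∈ T, #q.1 ∈ Icc 1 (Fintype.card α) := fun q hq =>
    mem_Icc.2 ⟨card_pos.2 (mem_filter.1 hq).2.2.1, card_le_univ q.1⟩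
  rw [card_equiv sumEquiv.toEquiv (t := T) fun W => by simp [T, card_toLeft_add_card_toRight],
    card_eq_sum_card_fiberwise hT]
  refine sum_congr rfl fun i hi => ?_
  rw [← card_univ, ← card_powersetCard, ← card_product]
  congr 1
  ext ⟨S, V⟩
  have hi := (mem_Icc.1 hi).1
  simp only [T, mem_filter, mem_univ, true_and, mem_product, mem_powersetCard, subset_univ]
  constructor
  · rintro ⟨⟨hN, -, hQ⟩, rfl⟩
    exact ⟨rfl, by omega, hQ⟩
  · rintro ⟨rfl, hN, hQ⟩
    exact ⟨⟨by omega, card_pos.1 hi, hQ⟩, rfl⟩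

lemma card_filter_isInset_eq_Fz (n : ℕ) (p : Fin n → ℕ) (m k i : ℕ) :
    #{V : Finset (InsetGround n p m) | #V + i = n + 1 + k ∧ IsInset V} =
      Fz n p m ((k : ℤ) - i + 1) := by
  rw [Fz]
  split_ifs with hik
  · rw [F_eq_card_isInset]
    exact congrArg card <| filter_congr fun V _ => and_congr_left fun _ => by omega
  · refine card_eq_zero.2 <| filter_eq_empty_iff.2 fun V _ ⟨hV, hI⟩ => ?_
    have := hI.le_card
    omega

theorem stmt_10_general (n : ℕ) (k m : ℕ) (p : Fin (n + 1) → ℕ) (j : Fin (n + 1)) :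
    F (n + 1) p m k =
      ∑ i ∈ Finset.Icc 1 (p j),
        (p j).choose i * Fz n (j.removeNth p) m ((k : ℤ) - i + 1) := by
  have hsplit : F (n + 1) p m k = #{W : Finset (Fin (p j) ⊕ InsetGround n (j.removeNth p) m) |
      #W = n + 1 + k ∧ W.toLeft.Nonempty ∧ IsInset W.toRight} := by
    rw [F_eq_card_isInset]
    refine (card_equiv (InsetGround.sumRemoveNthEquiv p m j).finsetCongr fun W => ?_).symm
    simp only [mem_filter, mem_univ, true_and, Equiv.finsetCongr_apply, card_map,
      isInset_map_sumRemoveNthEquiv]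
  rw [hsplit, card_filter_toLeft_nonempty_eq_sum_choose, Fintype.card_fin]
  simp only [card_filter_isInset_eq_Fz]

theorem stmt_10 (n : ℕ) (hn : 1 ≤ n) (k m : ℕ) (p : Fin (n + 1) → ℕ)
    (hp : ∀ i, 1 ≤ p i) (j : Fin (n + 1)) :
    F (n + 1) p m k =
      ∑ i ∈ Finset.Icc 1 (p j),
        (p j).choose i * Fz n (j.removeNth p) m ((k : ℤ) - i + 1) :=
  stmt_10_general n k m p j
end

section
/- Let c(n,k,0) denote the number of (n+k)-insets of a set X consisting of n main blocks of size 2 and no additional block. Then for all n ≥ 1 and 0 ≤ k ≤ n, the coefficient of x^{n-k} in the Chebyshev polynomial of the second kind U_{n+k}(x) equals (-1)^k · c(n,k,0). -/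
open Polynomial Finset

namespace Polynomial.Chebyshev

variable (R : Type*) [CommRing R]

theorem coeff_U_natCast_self (n : ℕ) : (U R n).coeff n = 2 ^ n := by
  have hℤ : (U ℤ n).coeff n = 2 ^ n := by
    rw [← leadingCoeff_U_natCast ℤ n, leadingCoeff, natDegree_U_natCast]
  rw [← map_U (Int.castRingHom R), coeff_map, hℤ, map_pow, map_ofNat]

theorem U_natCast_add_two (n : ℕ) :
    U R ((n + 2 : ℕ) : ℤ) = 2 * X * U R ((n + 1 : ℕ) : ℤ) - U R n := by
  push_cast
  exact U_add_two R n

theorem coeff_U_add_two_mul (d j : ℕ) :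
    (U R ((d + 2 * j : ℕ) : ℤ)).coeff d = (-1) ^ j * (d + j).choose j * 2 ^ d := by
  induction j generalizing d with
  | zero => simp [coeff_U_natCast_self]
  | succ j ihj =>
    induction d with
    | zero =>
      have h := ihj 0
      rw [zero_add] at h
      rw [show 0 + 2 * (j + 1) = 2 * j + 2 by ring, U_natCast_add_two, coeff_sub, h]
      simp [pow_succ]
    | succ d ihd =>
      rw [show d + 1 + 2 * (j + 1) = (d + 1 + 2 * j) + 2 by ring, U_natCast_add_two, coeff_sub,
        mul_assoc, coeff_ofNat_mul, coeff_X_mul, show d + 1 + 2 * j + 1 = d + 2 * (j + 1) by ring,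
        ihd, ihj, show d + 1 + (j + 1) = (d + j + 1) + 1 by ring, Nat.choose_succ_succ',
        show d + 1 + j = d + j + 1 by ring, ← add_assoc]
      push_cast
      ring

end Polynomial.Chebyshev

noncomputable def Finset.sigmaEquivPi {ι : Type*} [Fintype ι] (κ : ι → Type*) :
    Finset (Σ i, κ i) ≃ ∀ i, Finset (κ i) where
  toFun s i := s.preimage (Sigma.mk i) sigma_mk_injective.injOn
  invFun f := univ.sigma f
  left_inv s := by ext ⟨i, a⟩; simp
  right_inv f := by funext i; ext a; simp

theorem Polynomial.coeff_prod_sum_X_pow {ι R : Type*} [Fintype ι] [DecidableEq ι]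
    [CommSemiring R] {κ : ι → Type*} (t : ∀ i, Finset (κ i)) (w : ∀ i, κ i → ℕ) (m : ℕ) :
    (∏ i, ∑ a ∈ t i, (X : R[X]) ^ w i a).coeff m =
      #{f ∈ Fintype.piFinset t | ∑ i, w i (f i) = m} := by
  simp_rw [prod_univ_sum, prod_pow_eq_pow_sum, finsetSum_coeff, coeff_X_pow]
  rw [sum_boole]
  simp_rw [eq_comm]

theorem Finset.sum_filter_nonempty_pow_card {R : Type*} [CommRing R] (α : Type*) [Fintype α]
    [DecidableEq α] (a : R) :
    ∑ s ∈ {s : Finset α | s.Nonempty}, a ^ #s = (a + 1) ^ Fintype.card α - 1 := by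
  have h := sum_pow_mul_eq_add_pow a 1 (univ : Finset α)
  simp only [one_pow, mul_one, powerset_univ, card_univ] at h
  rw [← h, ← add_sum_erase univ _ (mem_univ ∅)]
  simp [filter_ne', nonempty_iff_ne_empty]

theorem F_zero_eq_card (n : ℕ) (p : Fin n → ℕ) (k : ℕ) :
    F n p 0 k = #{f ∈ Fintype.piFinset fun i => {s : Finset (Fin (p i)) | s.Nonempty} |
      ∑ i, #(f i) = n + k} := by
  let e := (Equiv.sumEmpty (Σ i, Fin (p i)) (Fin 0)).finsetCongr.trans (sigmaEquivPi _)
  refine (card_equiv e.symm fun f => ?_).symm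
  simp only [mem_filter, Fintype.mem_piFinset, mem_univ, true_and, Sigma.exists,
    exists_and_left, exists_eq_left, sigmaEquivPi, Equiv.symm_trans, Equiv.symm_mk,
    Equiv.finsetCongr_symm, Equiv.trans_apply, Equiv.coe_fn_mk, Equiv.finsetCongr_apply,
    card_map, card_sigma, mem_map_equiv, Equiv.symm_symm, Equiv.sumEmpty_apply_inl, mem_sigma, e]
  exact and_comm

theorem F_zero_eq_coeff_prod (R : Type*) [CommRing R] (n : ℕ) (p : Fin n → ℕ) (k : ℕ) :
    (F n p 0 k : R) = (∏ i, ((X + 1) ^ p i - 1 : R[X])).coeff (n + k) := by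
  have factor (i : Fin n) : (X + 1) ^ p i - 1 = ∑ s ∈ {s : Finset (Fin (p i)) | s.Nonempty},
      (X : R[X]) ^ #s := by
    rw [sum_filter_nonempty_pow_card, Fintype.card_fin]
  simp_rw [factor, coeff_prod_sum_X_pow, F_zero_eq_card]

theorem F_two_zero_eq (n k : ℕ) : F n (fun _ => 2) 0 k = n.choose k * 2 ^ (n - k) := by
  have h := F_zero_eq_coeff_prod ℤ n (fun _ => 2) k
  rw [show ((X : ℤ[X]) + 1) ^ 2 - 1 = X * (X + C 2) by rw [C_ofNat]; ring, prod_const,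
    card_univ, Fintype.card_fin, mul_pow, add_comm n, coeff_X_pow_mul, coeff_X_add_C_pow] at h
  exact_mod_cast h.trans (mul_comm _ _)

open Polynomial in
theorem stmt_12_general (n k : ℕ) (hk : k ≤ n) :
    (Chebyshev.U ℤ ((n : ℤ) + k)).coeff (n - k) =
      (-1 : ℤ) ^ k * (F n (fun _ => 2) 0 k : ℤ) := by
  have hidx : (n : ℤ) + k = ((n - k + 2 * k : ℕ) : ℤ) := by omega
  rw [hidx, Chebyshev.coeff_U_add_two_mul, F_two_zero_eq, Nat.sub_add_cancel hk]
  push_cast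
  ring

open Polynomial in
theorem stmt_12 (n k : ℕ) (hn : 1 ≤ n) (hk : k ≤ n) :
    (Chebyshev.U ℤ ((n : ℤ) + k)).coeff (n - k) =
      (-1 : ℤ) ^ k * (F n (fun _ => 2) 0 k : ℤ) :=
  stmt_12_general n k hk
end

section
/- Let c(n,k,1) denote the number of (n+k)-insets of a set X consisting of n main blocks of size 2 and one additional block with 1 element. Then for all n ≥ 1 and 0 ≤ k ≤ n, the coefficient of x^{n-k+1} in the Chebyshev polynomial of the first kind T_{n+k+1}(x) equals (-1)^k · c(n,k,1). -/
open Polynomial Finset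

namespace Finset

noncomputable def sigmaEquivPi_s13 {ι : Type*} [Fintype ι] {κ : ι → Type*} :
    Finset (Σ i, κ i) ≃ ((i : ι) → Finset (κ i)) where
  toFun s i := s.preimage (Sigma.mk i) sigma_mk_injective.injOn
  invFun f := univ.sigma f
  left_inv s := by ext ⟨i, x⟩; simp
  right_inv f := by funext i; ext x; simp

theorem sum_pow_card {α R : Type*} [Fintype α] [CommSemiring R] (a : R) :
    ∑ s : Finset α, a ^ #s = (a + 1) ^ Fintype.card α := by
  simpa using Fintype.sum_pow_mul_eq_add_pow α a 1

theorem sum_pow_card_filter_nonempty {α R : Type*} [Fintype α] [CommRing R] (a : R) :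
    ∑ s : Finset α with s.Nonempty, a ^ #s = (a + 1) ^ Fintype.card α - 1 := by
  have hempty : ({s | ¬s.Nonempty} : Finset (Finset α)) = {∅} := by
    ext s; simp [not_nonempty_iff_eq_empty]
  rw [eq_sub_iff_add_eq, ← sum_pow_card, ← sum_filter_add_sum_filter_not univ (·.Nonempty), hempty,
    sum_singleton, card_empty, pow_zero]

end Finset

theorem sum_pow_card_insets {R : Type*} [CommRing R] (n : ℕ) (p : Fin n → ℕ) (m : ℕ) (a : R) :
    ∑ U : Finset (InsetGround n p m) with
        ∀ i : Fin n, ∃ x : Σ j : Fin n, Fin (p j), x.1 = i ∧ Sum.inl x ∈ U, a ^ #U =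
      (∏ i, ((a + 1) ^ p i - 1)) * (a + 1) ^ m := by
  let e : Finset (InsetGround n p m) ≃ ((i : Fin n) → Finset (Fin (p i))) × Finset (Fin m) :=
    sumEquiv.toEquiv.trans (sigmaEquivPi_s13.prodCongr (Equiv.refl _))
  have he (f : (i : Fin n) → Finset (Fin (p i))) (b : Finset (Fin m)) :
      e.symm (f, b) = (univ.sigma f).disjSum b := rfl
  have hmeets (f : (i : Fin n) → Finset (Fin (p i))) :
      (∀ i, ∃ x : Σ j : Fin n, Fin (p j), x.1 = i ∧ x.2 ∈ f x.1) ↔ ∀ i, (f i).Nonempty := by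
    refine forall_congr' fun i => ⟨?_, fun ⟨x, hx⟩ => ⟨⟨i, x⟩, rfl, hx⟩⟩
    rintro ⟨⟨j, x⟩, rfl, hx⟩
    exact ⟨x, hx⟩
  have hpi : ({f | ∀ i, (f i).Nonempty} : Finset ((i : Fin n) → Finset (Fin (p i)))) =
      Fintype.piFinset fun i => {s | s.Nonempty} := by
    ext f; simp
  rw [sum_filter, ← e.symm.sum_comp, Fintype.sum_prod_type]
  simp only [he, card_disjSum, card_sigma, pow_add, inl_mem_disjSum, mem_sigma, mem_univ, true_and,
    hmeets, ← ite_zero_mul, ← mul_sum, ← sum_mul, ← sum_filter, hpi, ← prod_pow_eq_pow_sum]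
  rw [← prod_univ_sum (fun i => {s | s.Nonempty}) (fun _ s => a ^ #s)]
  simp only [sum_pow_card_filter_nonempty, sum_pow_card, Fintype.card_fin]

theorem F_eq_coeff {R : Type*} [CommRing R] (n : ℕ) (p : Fin n → ℕ) (m k : ℕ) :
    (F n p m k : R) = ((∏ i, ((X + 1) ^ p i - 1)) * (X + 1) ^ m : R[X]).coeff (n + k) := by
  rw [← sum_pow_card_insets, finsetSum_coeff]
  simp only [coeff_X_pow, sum_boole, filter_filter, F, eq_comm (a := n + k), and_comm]

theorem F_two_one_eq_coeff (n k : ℕ) :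
    (F n (fun _ => 2) 1 k : ℤ) = ((X + 2) ^ n * (X + 1) : ℤ[X]).coeff k := by
  rw [F_eq_coeff, prod_const, card_univ, Fintype.card_fin, pow_one,
    show (X + 1) ^ 2 - 1 = (X * (X + 2) : ℤ[X]) by ring, mul_pow, mul_comm (X ^ n), mul_right_comm,
    add_comm n k, coeff_mul_X_pow]

namespace Polynomial

variable {R : Type*} [CommRing R]

theorem coeff_X_add_two_mul_succ (q : R[X]) (k : ℕ) :
    ((X + 2) * q).coeff (k + 1) = q.coeff k + 2 * q.coeff (k + 1) := by
  rw [add_mul, coeff_add, coeff_X_mul, coeff_ofNat_mul]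

theorem coeff_X_add_two_mul_zero (q : R[X]) : ((X + 2) * q).coeff 0 = 2 * q.coeff 0 := by
  rw [add_mul, coeff_add, coeff_X_mul_zero, coeff_ofNat_mul, zero_add]

namespace Chebyshev

theorem coeff_T_add_two_succ (m : ℤ) (d : ℕ) :
    (T R (m + 2)).coeff (d + 1) = 2 * (T R (m + 1)).coeff d - (T R m).coeff (d + 1) := by
  rw [T_add_two, coeff_sub, mul_assoc, coeff_ofNat_mul, coeff_X_mul]

theorem coeff_T_add_two_zero (m : ℤ) : (T R (m + 2)).coeff 0 = -(T R m).coeff 0 := by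
  rw [T_add_two, coeff_sub, mul_assoc, coeff_ofNat_mul, coeff_X_mul_zero, mul_zero, zero_sub]

theorem coeff_T_eq_coeff_X_add_two_pow_mul (n k : ℕ) (hk : k ≤ n + 1) :
    (T ℤ ((n : ℤ) + k + 1)).coeff (n + 1 - k) = (-1) ^ k * ((X + 2) ^ n * (X + 1)).coeff k := by
  induction n generalizing k with
  | zero =>
    interval_cases k
    · simp
    · simpa [coeff_one] using coeff_T_add_two_zero (R := ℤ) 0
  | succ n ih =>
    rw [pow_succ', mul_assoc]
    set G : ℤ[X] := (X + 2) ^ n * (X + 1)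
    rcases k with _ | k
    · have hdeg : (T ℤ n).coeff (n + 2) = 0 := coeff_eq_zero_of_natDegree_lt (by simp)
      have h0 := ih 0 (by omega)
      simp only [Nat.cast_zero, add_zero, Nat.sub_zero, pow_zero, one_mul] at h0 ⊢
      rw [Nat.cast_succ, add_assoc, one_add_one_eq_two, coeff_T_add_two_succ, hdeg, h0,
        coeff_X_add_two_mul_zero, sub_zero]
    · rcases Nat.lt_or_ge k (n + 1) with hkn | hkn
      · have h1 := ih (k + 1) hkn
        have h0 := ih k hkn.le
        rw [show n + 1 - (k + 1) = n - k by omega] at h1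
        rw [show n + 1 - k = n - k + 1 by omega] at h0
        rw [show ((n + 1 : ℕ) : ℤ) + (k + 1 : ℕ) + 1 = (n + k + 1) + 2 by push_cast; ring,
          show n + 1 + 1 - (k + 1) = n - k + 1 by omega, coeff_T_add_two_succ,
          show (n : ℤ) + k + 1 + 1 = n + (k + 1 : ℕ) + 1 by push_cast; ring, h1, h0,
          coeff_X_add_two_mul_succ]
        ring
      · obtain rfl : k = n + 1 := by omega
        have hdeg : G.coeff (n + 2) = 0 :=
          coeff_eq_zero_of_natDegree_lt (by unfold G; compute_degree!)
        have h0 := ih (n + 1) le_rfl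
        rw [Nat.sub_self] at h0
        rw [show ((n + 1 : ℕ) : ℤ) + (n + 1 + 1 : ℕ) + 1 = (n + (n + 1 : ℕ) + 1) + 2 by
          push_cast; ring, Nat.sub_self, coeff_T_add_two_zero, h0, coeff_X_add_two_mul_succ, hdeg]
        ring

end Chebyshev

end Polynomial

open Polynomial in
theorem stmt_13_general (n k : ℕ) (hk : k ≤ n) :
    (Chebyshev.T ℤ ((n : ℤ) + k + 1)).coeff (n - k + 1) =
      (-1 : ℤ) ^ k * (F n (fun _ => 2) 1 k : ℤ) := by
  rw [show n - k + 1 = n + 1 - k by omega,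
    Chebyshev.coeff_T_eq_coeff_X_add_two_pow_mul n k (by omega),
    F_two_one_eq_coeff]

open Polynomial in
theorem stmt_13 (n k : ℕ) (hn : 1 ≤ n) (hk : k ≤ n) :
    (Chebyshev.T ℤ ((n : ℤ) + k + 1)).coeff (n - k + 1) =
      (-1 : ℤ) ^ k * (F n (fun _ => 2) 1 k : ℤ) :=
  stmt_13_general n k hk
end

section
/- For all n ≥ 1 and 0 ≤ k ≤ n, the coefficient of x^{n-k} in the Chebyshev polynomial of the second kind U_{n+k}(x) equals (-1)^k · Σ_{i=0}^{n} (-1)^i · C(n,i) · C(2n - 2i, n+k). -/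
open Polynomial

/-- Claimed coefficient of `x^d` in `U_m`. -/
def chebCoeff (m d : ℕ) : ℤ :=
  if d ≤ m ∧ (m - d) % 2 = 0 then
    (-1 : ℤ) ^ ((m - d) / 2) * (((m + d) / 2).choose ((m - d) / 2) : ℤ) * 2 ^ d
  else 0

lemma chebCoeff_key0 (m : ℕ) : chebCoeff (m + 2) 0 = -(chebCoeff m 0) := by
  unfold chebCoeff
  split_ifs with h1 h2 h2
  · obtain ⟨j, hj⟩ : ∃ j, m = 2 * j := ⟨m / 2, by omega⟩
    subst hj
    have e1 : (2 * j + 2 - 0) / 2 = j + 1 := by omega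
    have e2 : (2 * j + 2 + 0) / 2 = j + 1 := by omega
    have e3 : (2 * j - 0) / 2 = j := by omega
    have e4 : (2 * j + 0) / 2 = j := by omega
    rw [e1, e2, e3, e4, Nat.choose_self, Nat.choose_self]
    push_cast
    ring
  · omega
  · omega
  · ring

lemma chebCoeff_key1 (m d : ℕ) :
    chebCoeff (m + 2) (d + 1) = 2 * chebCoeff (m + 1) d - chebCoeff m (d + 1) := by
  unfold chebCoeff
  split_ifs with h1 h2 h3 h3 h2 h3 h3
  · -- all three conditions hold
    obtain ⟨j, hj⟩ : ∃ j, m = d + 2 * j + 1 := ⟨(m - d - 1) / 2, by omega⟩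
    subst hj
    have e1 : (d + 2 * j + 1 + 2 - (d + 1)) / 2 = j + 1 := by omega
    have e2 : (d + 2 * j + 1 + 2 + (d + 1)) / 2 = d + j + 2 := by omega
    have e3 : (d + 2 * j + 1 + 1 - d) / 2 = j + 1 := by omega
    have e4 : (d + 2 * j + 1 + 1 + d) / 2 = d + j + 1 := by omega
    have e5 : (d + 2 * j + 1 - (d + 1)) / 2 = j := by omega
    have e6 : (d + 2 * j + 1 + (d + 1)) / 2 = d + j + 1 := by omega
    rw [e1, e2, e3, e4, e5, e6]
    have hp : (d + j + 2).choose (j + 1) = (d + j + 1).choose j + (d + j + 1).choose (j + 1) := by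
      exact Nat.choose_succ_succ (d + j + 1) j
    rw [hp]
    push_cast
    ring
  · -- first two conditions, third fails : d = m + 1
    have hd : d = m + 1 := by omega
    subst hd
    have e1 : (m + 2 - (m + 1 + 1)) / 2 = 0 := by omega
    have e2 : (m + 2 + (m + 1 + 1)) / 2 = m + 2 := by omega
    have e3 : (m + 1 - (m + 1)) / 2 = 0 := by omega
    have e4 : (m + 1 + (m + 1)) / 2 = m + 1 := by omega
    rw [e1, e2, e3, e4, Nat.choose_zero_right, Nat.choose_zero_right]
    push_cast
    ring
  · omega
  · omega
  · omega
  · omega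
  · omega
  · ring

lemma U_coeff_eq : ∀ m : ℕ, ∀ d : ℕ, (Chebyshev.U ℤ m).coeff d = chebCoeff m d := by
  intro m
  induction m using Nat.twoStepInduction with
  | zero =>
    intro d
    rw [show ((0 : ℕ) : ℤ) = 0 by norm_num, Chebyshev.U_zero]
    cases d with
    | zero => norm_num [chebCoeff]
    | succ d =>
      rw [coeff_one]
      unfold chebCoeff
      rw [if_neg (by simp), if_neg (by omega)]
  | one =>
    intro d
    rw [show ((1 : ℕ) : ℤ) = 1 by norm_num, Chebyshev.U_one]
    match d with
    | 0 =>
      unfold chebCoeff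
      rw [if_neg (by omega)]
      simp
    | 1 =>
      unfold chebCoeff
      rw [if_pos (by omega)]
      norm_num [coeff_X_one]
    | (d + 2) =>
      unfold chebCoeff
      rw [if_neg (by omega)]
      simp [coeff_X]
  | more m ih ih1 =>
    intro d
    have hcast : ((m + 2 : ℕ) : ℤ) = (m : ℤ) + 2 := by push_cast; ring
    rw [hcast, Chebyshev.U_add_two]
    have hrw : (2 : ℤ[X]) * X * Chebyshev.U ℤ ((m : ℤ) + 1) =
        X * (2 * Chebyshev.U ℤ ((m : ℤ) + 1)) := by ring
    rw [coeff_sub, hrw]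
    have hcast1 : ((m + 1 : ℕ) : ℤ) = (m : ℤ) + 1 := by push_cast; ring
    cases d with
    | zero =>
      rw [chebCoeff_key0, mul_coeff_zero, coeff_X_zero, zero_mul, zero_sub, ih 0]
    | succ d =>
      rw [coeff_X_mul, coeff_ofNat_mul, ← hcast1, ih1 d, ih (d + 1), chebCoeff_key1]

lemma sum_identity (n k : ℕ) (hk : k ≤ n) :
    ∑ i ∈ Finset.range (n + 1), (-1 : ℤ) ^ i * (n.choose i : ℤ) *
        ((2 * n - 2 * i).choose (n + k) : ℤ) =
      (n.choose k : ℤ) * 2 ^ (n - k) := by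
  have hpoly : (((X + 1 : ℤ[X]) ^ 2 - 1) ^ n) = X ^ n * (X + C 2) ^ n := by
    have : ((X + 1 : ℤ[X]) ^ 2 - 1) = X * (X + C 2) := by
      have h2 : (C 2 : ℤ[X]) = 2 := by simp
      rw [h2]; ring
    rw [this, mul_pow]
  have hL : (((X + 1 : ℤ[X]) ^ 2 - 1) ^ n).coeff (n + k) =
      ∑ i ∈ Finset.range (n + 1), (-1 : ℤ) ^ i * (n.choose i : ℤ) *
        ((2 * n - 2 * i).choose (n + k) : ℤ) := by
    rw [sub_pow]
    rw [finset_sum_coeff]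
    rw [← Finset.sum_range_reflect]
    refine Finset.sum_congr rfl ?_
    intro i hi
    have hi' : i ≤ n := by simpa [Nat.lt_succ_iff] using hi
    have e0 : n + 1 - 1 - i = n - i := by omega
    rw [e0]
    have e1 : ((X + 1 : ℤ[X]) ^ 2) ^ (n - i) = (X + 1) ^ (2 * (n - i)) := by
      rw [← pow_mul, mul_comm]
    have e2 : (2 * (n - i)) = 2 * n - 2 * i := by omega
    rw [one_pow, mul_one, e1, e2]
    rw [← C_eq_natCast, coeff_mul_C,
      show ((-1 : ℤ[X])) ^ (n - i + n) = C ((-1 : ℤ) ^ (n - i + n)) by simp,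
      coeff_C_mul, coeff_X_add_one_pow]
    have e3 : n - i + n = i + 2 * (n - i) := by omega
    rw [e3, pow_add, pow_mul, Nat.choose_symm hi']
    norm_num
    ring
  rw [← hL, hpoly, show n + k = k + n by ring, coeff_X_pow_mul, coeff_X_add_C_pow]
  ring

open Polynomial in
theorem stmt_14 (n k : ℕ) (hn : 1 ≤ n) (hk : k ≤ n) :
    (Chebyshev.U ℤ ((n : ℤ) + k)).coeff (n - k) =
      (-1 : ℤ) ^ k *
        ∑ i ∈ Finset.range (n + 1), (-1 : ℤ) ^ i * (n.choose i : ℤ) *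
          ((2 * n - 2 * i).choose (n + k) : ℤ) := by
  have hc : ((n : ℤ) + k) = ((n + k : ℕ) : ℤ) := by push_cast; ring
  rw [hc, U_coeff_eq (n + k) (n - k), sum_identity n k hk]
  unfold chebCoeff
  rw [if_pos (by omega)]
  have e1 : (n + k - (n - k)) / 2 = k := by omega
  have e2 : (n + k + (n - k)) / 2 = n := by omega
  rw [e1, e2]
  ring
end

section
/- For all n ≥ 1 and 0 ≤ k ≤ n, the coefficient of x^{n-k+1} in the Chebyshev polynomial of the first kind T_{n+k+1}(x) equals (-1)^k · Σ_{i=0}^{n} (-1)^i · C(n,i) · C(2n + 1 - 2i, n+k). -/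
open Polynomial Finset in
/-- The coefficient of `x^d` in `T_{d+2j}`. -/
def cf (d j : ℕ) : ℤ :=
  if d = 0 then (-1) ^ j
  else (-1) ^ j * 2 ^ (d - 1) *
    (((d + j).choose j : ℤ) + if j = 0 then 0 else ((d + j - 1).choose (j - 1) : ℤ))

lemma cf_zero (j : ℕ) : cf 0 j = (-1) ^ j := by simp [cf]

lemma cf_j0 (d : ℕ) (hd : 1 ≤ d) : cf d 0 = 2 ^ (d - 1) := by
  unfold cf
  rw [if_neg (by omega)]
  simp

lemma cf_rec (d j : ℕ) (hj : 1 ≤ j) : cf (d + 1) j = 2 * cf d j - cf (d + 1) (j - 1) := by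
  obtain ⟨j, rfl⟩ : ∃ j', j = j' + 1 := ⟨j - 1, by omega⟩
  cases d with
  | zero =>
      rcases Nat.eq_zero_or_pos j with rfl | hj'
      · norm_num [cf]
      · simp only [cf, Nat.add_sub_cancel, if_neg (by omega : ¬ j + 1 = 0),
          if_neg (by omega : ¬ (1:ℕ) = 0), if_neg (by omega : ¬ j = 0)]
        have h1 : (1 + (j+1)).choose (j+1) = j + 2 := by
          rw [show 1 + (j+1) = (j+1)+1 by ring]; exact Nat.choose_succ_self_right (j+1)
        have h2 : (1 + (j+1) - 1).choose j = j + 1 := by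
          simpa using Nat.choose_succ_self_right j
        have h3 : (1 + j).choose j = j + 1 := by
          rw [add_comm]; exact Nat.choose_succ_self_right j
        have h4 : (1 + j - 1).choose (j - 1) = j := by
          obtain ⟨j', rfl⟩ : ∃ j', j = j' + 1 := ⟨j - 1, by omega⟩
          simpa using Nat.choose_succ_self_right j'
        rw [h1, h2, h3, h4]
        push_cast; ring
  | succ d =>
      simp only [cf, Nat.add_sub_cancel, if_neg (by omega : ¬ d + 1 + 1 = 0),
        if_neg (by omega : ¬ d + 1 = 0), if_neg (by omega : ¬ j + 1 = 0)]
      rcases Nat.eq_zero_or_pos j with rfl | hj'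
      · simp only [if_pos rfl]
        norm_num [Nat.choose_one_right]
        push_cast; ring
      · obtain ⟨j', rfl⟩ : ∃ j'', j = j'' + 1 := ⟨j - 1, by omega⟩
        simp only [if_neg (by omega : ¬ j' + 1 = 0), Nat.add_sub_cancel]
        have q1 : (d + 1 + 1 + (j' + 1 + 1)).choose (j' + 1 + 1)
            = (d + 1 + (j' + 1 + 1)).choose (j' + 1) + (d + 1 + (j' + 1 + 1)).choose (j' + 1 + 1) := by
          rw [show d + 1 + 1 + (j' + 1 + 1) = (d + 1 + (j' + 1 + 1)) + 1 by ring]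
          exact Nat.choose_succ_succ _ (j' + 1)
        have q2 : (d + 1 + (j' + 1 + 1)).choose (j' + 1)
            = (d + 1 + (j' + 1)).choose j' + (d + 1 + (j' + 1)).choose (j' + 1) := by
          rw [show d + 1 + (j' + 1 + 1) = (d + 1 + (j' + 1)) + 1 by ring]
          exact Nat.choose_succ_succ _ j'
        rw [show d + 1 + 1 + (j' + 1 + 1) - 1 = d + 1 + (j' + 1 + 1) by omega,
          show d + 1 + (j' + 1 + 1) - 1 = d + 1 + (j' + 1) by omega,
          show d + 1 + 1 + (j' + 1) - 1 = d + 1 + (j' + 1) by omega,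
          q1, q2]
        have q3 : (d + 1 + 1 + (j' + 1)).choose (j' + 1)
            = (d + 1 + (j' + 1)).choose j' + (d + 1 + (j' + 1)).choose (j' + 1) := by
          rw [show d + 1 + 1 + (j' + 1) = (d + 1 + (j' + 1)) + 1 by ring]
          exact Nat.choose_succ_succ _ j'
        rw [q3]
        push_cast; ring

open Polynomial in
lemma T_coeff : ∀ m d : ℕ, (Chebyshev.T ℤ m).coeff d =
    if d ≤ m ∧ (m - d) % 2 = 0 then cf d ((m - d) / 2) else 0 := by
  intro m
  induction m using Nat.strong_induction_on with
  | _ m ih =>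
  match m with
  | 0 =>
      intro d
      rcases d with _ | d <;>
        simp [Chebyshev.T_zero, coeff_one, cf_zero, Nat.succ_ne_zero]
  | 1 =>
      intro d
      rcases d with _ | _ | d <;>
        simp [Chebyshev.T_one, coeff_X, cf_j0]
  | (m + 2) =>
      intro d
      have h1 := ih (m + 1) (by omega)
      have h0 := ih m (by omega)
      rw [show ((m + 2 : ℕ) : ℤ) = (m : ℤ) + 2 by push_cast; ring, Chebyshev.T_add_two,
        coeff_sub, mul_assoc, show ((2 : ℤ[X])) = C 2 by norm_num, coeff_C_mul]
      rcases d with _ | d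
      · rw [mul_coeff_zero, coeff_X_zero, h0 0]
        by_cases hme : m % 2 = 0
        · rw [if_pos (by omega : (0:ℕ) ≤ m + 2 ∧ (m + 2 - 0) % 2 = 0),
            if_pos (by omega : (0:ℕ) ≤ m ∧ (m - 0) % 2 = 0), cf_zero, cf_zero,
            show (m + 2 - 0) / 2 = (m - 0) / 2 + 1 by omega, pow_succ]
          ring
        · rw [if_neg (by omega), if_neg (by omega)]; ring
      · rw [coeff_X_mul, show ((m : ℤ) + 1) = ((m + 1 : ℕ) : ℤ) by push_cast; ring,
          h1 d, h0 (d + 1)]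
        by_cases hA : d ≤ m + 1
        · by_cases hP : (m + 1 - d) % 2 = 0
          · rw [if_pos (by omega : d + 1 ≤ m + 2 ∧ (m + 2 - (d + 1)) % 2 = 0),
              if_pos ⟨hA, hP⟩]
            by_cases hj : (m + 1 - d) / 2 = 0
            · have hd : d = m + 1 := by omega
              rw [if_neg (by omega), show (m + 2 - (d + 1)) / 2 = 0 by omega, hj,
                cf_j0 _ (by omega), cf_j0 _ (by omega)]
              rw [show d + 1 - 1 = d by omega]
              subst hd
              rw [show m + 1 - 1 = m by omega, pow_succ]
              ring
            · obtain ⟨j, hjeq⟩ : ∃ j, m + 1 - d = 2 * j := ⟨(m + 1 - d) / 2, by omega⟩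
              rw [if_pos (by omega : d + 1 ≤ m ∧ (m - (d + 1)) % 2 = 0),
                show (m + 2 - (d + 1)) / 2 = (m + 1 - d) / 2 by omega,
                show (m - (d + 1)) / 2 = (m + 1 - d) / 2 - 1 by omega]
              exact (cf_rec d ((m + 1 - d) / 2) (by omega)).symm
          · rw [if_neg (by omega), if_neg (by omega), if_neg (by omega)]; ring
        · rw [if_neg (by omega), if_neg (by omega), if_neg (by omega)]; ring

open Polynomial Finset in
lemma poly_id (n : ℕ) :
    (1 + X : ℤ[X]) * X ^ n * (X + 2) ^ n
      = ∑ i ∈ Finset.range (n + 1), C ((-1 : ℤ) ^ i * (n.choose i : ℤ)) * (1 + X) ^ (2 * (n - i) + 1) := by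
  have h1 : (X : ℤ[X]) ^ n * (X + 2) ^ n = ((1 + X) ^ 2 - 1) ^ n := by
    rw [← mul_pow]; ring_nf
  calc (1 + X : ℤ[X]) * X ^ n * (X + 2) ^ n
      = (1 + X) * ((1 + X) ^ 2 - 1) ^ n := by rw [mul_assoc, h1]
    _ = (1 + X) * ∑ m ∈ range (n + 1),
          (-1) ^ (m + n) * ((1 + X) ^ 2) ^ m * 1 ^ (n - m) * (n.choose m) := by rw [sub_pow]
    _ = ∑ m ∈ range (n + 1), C ((-1 : ℤ) ^ (m + n) * (n.choose m : ℤ)) * (1 + X) ^ (2 * m + 1) := by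
        rw [Finset.mul_sum]
        refine Finset.sum_congr rfl fun m hm => ?_
        simp only [map_mul, map_pow, map_neg, map_one, map_natCast, one_pow, mul_one,
          pow_succ, pow_mul]
        ring
    _ = ∑ i ∈ Finset.range (n + 1), C ((-1 : ℤ) ^ i * (n.choose i : ℤ)) * (1 + X) ^ (2 * (n - i) + 1) := by
        rw [← Finset.sum_range_reflect]
        refine Finset.sum_congr rfl fun i hi => ?_
        have hi' : i ≤ n := by simp at hi; omega
        rw [show n + 1 - 1 - i = n - i by omega, Nat.choose_symm hi',
          show n - i + n = i + 2 * (n - i) by omega, pow_add, pow_mul, neg_one_sq, one_pow, mul_one]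

open Polynomial Finset in
lemma sum_eval (n k : ℕ) (hk : k ≤ n) :
    ∑ i ∈ Finset.range (n + 1), (-1 : ℤ) ^ i * (n.choose i : ℤ) * ((2 * n + 1 - 2 * i).choose (n + k) : ℤ)
      = 2 ^ (n - k) * (n.choose k : ℤ)
        + (if k = 0 then 0 else 2 * 2 ^ (n - k) * (n.choose (k - 1) : ℤ)) := by
  have h := congrArg (fun p : ℤ[X] => p.coeff (n + k)) (poly_id n)
  simp only [finset_sum_coeff, coeff_C_mul] at h
  have hL : ((1 + X : ℤ[X]) * X ^ n * (X + 2) ^ n).coeff (n + k)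
      = 2 ^ (n - k) * (n.choose k : ℤ)
        + (if k = 0 then 0 else 2 * 2 ^ (n - k) * (n.choose (k - 1) : ℤ)) := by
    rw [show (1 + X : ℤ[X]) * X ^ n * (X + 2) ^ n = X ^ n * ((X + 2) ^ n + X * (X + 2) ^ n) by ring,
      show n + k = k + n by ring, coeff_X_pow_mul, coeff_add]
    have h2 : ((X + 2 : ℤ[X]) ^ n) = (X + C 2) ^ n := by norm_num
    rcases k with _ | k
    · rw [mul_coeff_zero, coeff_X_zero, zero_mul, h2, coeff_X_add_C_pow]
      simp
    · rw [coeff_X_mul, h2, coeff_X_add_C_pow, coeff_X_add_C_pow,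
        if_neg (Nat.succ_ne_zero k)]
      push_cast
      rw [show n - k = n - (k + 1) + 1 by omega, pow_succ]
      ring
  rw [hL] at h
  rw [h]
  refine Finset.sum_congr rfl fun i hi => ?_
  have hi' : i ≤ n := by simp at hi; omega
  rw [coeff_one_add_X_pow, show 2 * (n - i) + 1 = 2 * n + 1 - 2 * i by omega]

open Polynomial in
theorem stmt_15 (n k : ℕ) (hn : 1 ≤ n) (hk : k ≤ n) :
    (Chebyshev.T ℤ ((n : ℤ) + k + 1)).coeff (n - k + 1) =
      (-1 : ℤ) ^ k *
        ∑ i ∈ Finset.range (n + 1), (-1 : ℤ) ^ i * (n.choose i : ℤ) *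
          ((2 * n + 1 - 2 * i).choose (n + k) : ℤ) := by
  rw [show ((n : ℤ) + k + 1) = ((n + k + 1 : ℕ) : ℤ) by push_cast; ring, T_coeff,
    if_pos (by omega : n - k + 1 ≤ n + k + 1 ∧ (n + k + 1 - (n - k + 1)) % 2 = 0),
    show (n + k + 1 - (n - k + 1)) / 2 = k by omega, sum_eval n k hk]
  simp only [cf, if_neg (by omega : ¬ n - k + 1 = 0)]
  rw [show n - k + 1 + k = n + 1 by omega, show n - k + 1 - 1 = n - k by omega,
    show n + 1 - 1 = n by omega]
  rcases k with _ | k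
  · simp
  · rw [if_neg (Nat.succ_ne_zero k), if_neg (Nat.succ_ne_zero k),
      show k + 1 - 1 = k by omega, Nat.choose_succ_succ n k]
    push_cast
    ring
end
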